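/- The families SC(1,1) and SC'(1,1) of languages generated by semi-conditional grammars of degree (1,1) under the inclusive and exclusive definitions of the derivation step coincide: SC(1,1) = SC'(1,1). -/

import Mathlib

/-- Symbols: nonterminals `N` plus terminals `T`. -/
abbrev Symb (N T : Type) := N ⊕ T

/-- `alph w` is the set of symbols occurring in the string `w`. -/
def alph {α : Type} (w : List α) : Set α := {a | a ∈ w}

/-- A (nonerasing) random context grammar: finitely many productions
`(A → x, Per, For)` with `A ∈ N`, `x ∈ (N ∪ T)⁺`, `Per, For ⊆ N`. -/
structure RCG (N T : Type) where
  rules : Set (N × List (Symb N T) × Set N × Set N)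
  fin : rules.Finite
  ne : ∀ r ∈ rules, r.2.1 ≠ []
  start : N

/-- One derivation step of a random context grammar.  The flag `incl` tells whether
the rewritten symbol is included in the context check (`true`: conditions checked
against `alph (uAv)`; `false`: against `alph (uv)`). -/
def RCG.Step {N T : Type} (G : RCG N T) (incl : Bool)
    (s₁ s₂ : List (Symb N T)) : Prop :=
  ∃ A x Per For u v, (A, x, Per, For) ∈ G.rules ∧
    s₁ = u ++ Sum.inl A :: v ∧ s₂ = u ++ x ++ v ∧
    (∀ B ∈ Per, Sum.inl B ∈ alph (if incl then s₁ else u ++ v)) ∧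
    (∀ B ∈ For, Sum.inl B ∉ alph (if incl then s₁ else u ++ v))

/-- The language of a random context grammar (under the chosen derivation definition). -/
def RCG.Lang {N T : Type} (G : RCG N T) (incl : Bool) : Set (List T) :=
  {w | Relation.ReflTransGen (G.Step incl) [Sum.inl G.start] (w.map Sum.inr)}

/-- The family of random context languages over terminal alphabet `T`
(standard definition: rewritten symbol excluded from the context check). -/
def RC (T : Type) : Set (Set (List T)) :=
  {L | ∃ (N : Type) (G : RCG N T), G.Lang false = L}

/-- A (nonerasing) semi-conditional grammar of degree (1,1): productions
`(A → x, Per, For)` with `Per, For ⊆ N ∪ T` of cardinality at most one. -/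
structure SCG (N T : Type) where
  rules : Set (N × List (Symb N T) × Set (Symb N T) × Set (Symb N T))
  fin : rules.Finite
  ne : ∀ r ∈ rules, r.2.1 ≠ []
  per1 : ∀ r ∈ rules, r.2.2.1.Subsingleton
  for1 : ∀ r ∈ rules, r.2.2.2.Subsingleton
  start : N

/-- One derivation step of a semi-conditional grammar; `incl` as in `RCG.Step`. -/
def SCG.Step {N T : Type} (G : SCG N T) (incl : Bool)
    (s₁ s₂ : List (Symb N T)) : Prop :=
  ∃ A x Per For u v, (A, x, Per, For) ∈ G.rules ∧
    s₁ = u ++ Sum.inl A :: v ∧ s₂ = u ++ x ++ v ∧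
    Per ⊆ alph (if incl then s₁ else u ++ v) ∧
    (∀ a ∈ For, a ∉ alph (if incl then s₁ else u ++ v))

/-- The language of a semi-conditional grammar. -/
def SCG.Lang {N T : Type} (G : SCG N T) (incl : Bool) : Set (List T) :=
  {w | Relation.ReflTransGen (G.Step incl) [Sum.inl G.start] (w.map Sum.inr)}

/-- The family SC(1,1): inclusive derivation definition (context `alph (uAv)`). -/
def SC11 (T : Type) : Set (Set (List T)) :=
  {L | ∃ (N : Type) (G : SCG N T), G.Lang true = L}

/-- The family SC'(1,1): exclusive derivation definition (context `alph (uv)`). -/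
def SC11' (T : Type) : Set (Set (List T)) :=
  {L | ∃ (N : Type) (G : SCG N T), G.Lang false = L}

/-!
An inclusive rule `(A → x, Per, For)` acts exactly as the exclusive rule `(A → x, Per \ {A}, For)`
when `A ∉ For`, and never applies when `A ∈ For`.

Conversely, an exclusive grammar is simulated under the inclusive definition by a control symbol
that replaces the first symbol `s` of the sentential form and remembers it. A rule `A → x` is
applied to the first symbol by the control directly. Elsewhere, the control first chooses the rule,
one occurrence of `A` is replaced by a tag, and only then does the control check the contexts: the
rewritten `A` is hidden in the tag, so the inclusive check sees exactly `uv`, up to `s`, which the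
control accounts for itself. The tag is then expanded to `x` and the control returns to idle.
Finally the control turns back into its held symbol; a nonterminal left over at that point is stuck,
because the only rule rewriting it needs a control symbol in its permitting context.
-/

open Relation

theorem List.mem_append_cons_iff {α : Type*} {a b : α} {u v : List α} :
    a ∈ u ++ b :: v ↔ a = b ∨ a ∈ u ++ v := by
  simp only [List.mem_append, List.mem_cons]
  tauto

theorem List.cons_eq_append_cons_of_notMem {α : Type*} {a b : α} {l u v : List α}
    (h : a :: l = u ++ b :: v) (hb : b ∉ l) : u = [] ∧ a = b ∧ l = v := by
  obtain ⟨hu, hab, hl⟩ := (List.append_cons_inj_of_notMem (x₁ := []) List.not_mem_nil hb).1 h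
  exact ⟨hu.symm, hab, hl⟩

theorem List.map_eq_append_cons_of_injective {α β : Type*} {f : α → β} (hf : f.Injective)
    {a : α} {l : List α} {u v : List β} (h : l.map f = u ++ f a :: v) :
    ∃ l₁ l₂, l = l₁ ++ a :: l₂ ∧ u = l₁.map f ∧ v = l₂.map f := by
  obtain ⟨l₁, l', rfl, rfl, h'⟩ := List.map_eq_append_iff.1 h
  obtain ⟨a', l₂, rfl, ha, rfl⟩ := List.map_eq_cons_iff.1 h'
  exact ⟨l₁, l₂, by rw [hf ha], rfl, rfl⟩

@[simp] theorem mem_alph {α : Type} {a : α} {w : List α} : a ∈ alph w ↔ a ∈ w := Iff.rfl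

namespace SCG

variable {N T : Type}

theorem step_iff (G : SCG N T) (incl : Bool) (s₁ s₂ : List (Symb N T)) :
    G.Step incl s₁ s₂ ↔ ∃ A x P F u v, (A, x, P, F) ∈ G.rules ∧
      s₁ = u ++ Sum.inl A :: v ∧ s₂ = u ++ x ++ v ∧
      (∀ a ∈ P, a ∈ (if incl then s₁ else u ++ v)) ∧
      ∀ a ∈ F, a ∉ (if incl then s₁ else u ++ v) :=
  Iff.rfl

theorem Step.ne_nil {G : SCG N T} {incl : Bool} {s₁ s₂ : List (Symb N T)}
    (h : G.Step incl s₁ s₂) : s₂ ≠ [] := by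
  obtain ⟨A, x, P, F, u, v, hr, -, rfl, -⟩ := h
  simp [G.ne _ hr]

theorem nil_notMem_lang (G : SCG N T) (incl : Bool) : [] ∉ G.Lang incl := by
  intro h
  rcases ReflTransGen.cases_tail h with h | ⟨_, -, hstep⟩
  · simp at h
  · exact hstep.ne_nil rfl

theorem step_false_of_mem_rules {G : SCG N T} {A : N} {x : List (Symb N T)}
    {P F : Set (Symb N T)} {u v : List (Symb N T)} (hr : (A, x, P, F) ∈ G.rules)
    (hP : ∀ a ∈ P, a ∈ u ++ v) (hF : ∀ a ∈ F, a ∉ u ++ v) :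
    G.Step false (u ++ Sum.inl A :: v) (u ++ x ++ v) :=
  ⟨A, x, P, F, u, v, hr, rfl, rfl, hP, hF⟩

def toExclusive (G : SCG N T) : SCG N T where
  rules := (fun q => (q.1, q.2.1, q.2.2.1 \ {Sum.inl q.1}, q.2.2.2)) ''
    {q ∈ G.rules | Sum.inl q.1 ∉ q.2.2.2}
  fin := (G.fin.subset (Set.sep_subset _ _)).image _
  ne := by rintro _ ⟨q, ⟨hq, -⟩, rfl⟩; exact G.ne q hq
  per1 := by rintro _ ⟨q, ⟨hq, -⟩, rfl⟩; exact (G.per1 q hq).anti Set.sdiff_subset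
  for1 := by rintro _ ⟨q, ⟨hq, -⟩, rfl⟩; exact G.for1 q hq
  start := G.start

theorem toExclusive_step_iff (G : SCG N T) (s₁ s₂ : List (Symb N T)) :
    G.toExclusive.Step false s₁ s₂ ↔ G.Step true s₁ s₂ := by
  simp only [step_iff, toExclusive, Set.mem_image, Set.mem_ofPred_eq, Prod.exists, Prod.mk.injEq,
    Bool.false_eq_true, ↓reduceIte]
  constructor
  · rintro ⟨A, x, -, F, u, v, ⟨A, x, P, F, ⟨hr, hAF⟩, rfl, rfl, rfl, rfl⟩, rfl, rfl, hP, hF⟩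
    refine ⟨A, x, P, F, u, v, hr, rfl, rfl, fun a ha => ?_, fun a ha => ?_⟩
    · rw [List.mem_append_cons_iff]
      by_cases haA : a = Sum.inl A
      exacts [Or.inl haA, Or.inr (hP a ⟨ha, haA⟩)]
    · rw [List.mem_append_cons_iff, not_or]
      exact ⟨by rintro rfl; exact hAF ha, hF a ha⟩
  · rintro ⟨A, x, P, F, u, v, hr, rfl, rfl, hP, hF⟩
    have hAF : Sum.inl A ∉ F := fun h => hF _ h (by simp)
    refine ⟨A, x, P \ {Sum.inl A}, F, u, v, ⟨A, x, P, F, ⟨hr, hAF⟩, rfl, rfl, rfl, rfl⟩, rfl, rfl,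
      fun a ha => ?_, fun a ha hmem => hF a ha (List.mem_append_cons_iff.2 (Or.inr hmem))⟩
    exact (List.mem_append_cons_iff.1 (hP a ha.1)).resolve_left ha.2

theorem lang_toExclusive (G : SCG N T) : G.toExclusive.Lang false = G.Lang true := by
  have : G.toExclusive.Step false = G.Step true := by
    ext s₁ s₂; exact toExclusive_step_iff G s₁ s₂
  simp only [Lang, this]
  rfl

def symbols (G : SCG N T) : Set (Symb N T) :=
  insert (Sum.inl G.start) (⋃ r ∈ G.rules, {σ | σ ∈ r.2.1})

theorem symbols_finite (G : SCG N T) : G.symbols.Finite :=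
  (G.fin.biUnion fun r _ => r.2.1.finite_toSet).insert _

theorem Step.mem_symbols {G : SCG N T} {incl : Bool} {s₁ s₂ : List (Symb N T)}
    (h : G.Step incl s₁ s₂) (hs₁ : ∀ σ ∈ s₁, σ ∈ G.symbols) : ∀ σ ∈ s₂, σ ∈ G.symbols := by
  obtain ⟨A, x, P, F, u, v, hr, rfl, rfl, -⟩ := h
  intro σ hσ
  rcases List.mem_append.1 hσ with hσ | hσ
  · rcases List.mem_append.1 hσ with hσ | hσ
    · exact hs₁ σ (by simp [hσ])
    · exact Set.mem_insert_of_mem _ (Set.mem_biUnion hr hσ)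
  · exact hs₁ σ (by simp [hσ])

abbrev Rule (N T : Type) := N × List (Symb N T) × Set (Symb N T) × Set (Symb N T)

inductive Control (N T : Type) : Type
  | idle (s : Symb N T)
  | chosen (r : Rule N T) (s : Symb N T)
  | verified (r : Rule N T) (s : Symb N T)
  | tag (r : Rule N T)

@[simp] def Control.held : Control N T → Symb N T
  | idle s | chosen _ s | verified _ s => s
  | tag r => Sum.inl r.1

abbrev SimSymb (N T : Type) := Symb (N ⊕ Control N T) T

def embed : Symb N T → SimSymb N T := Sum.map Sum.inl id

def ctl (c : Control N T) : SimSymb N T := Sum.inl (Sum.inr c)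

def erase : SimSymb N T → Symb N T := Sum.elim (Sum.elim Sum.inl Control.held) Sum.inr

def encode : List (Symb N T) → List (SimSymb N T)
  | [] => []
  | s :: l => ctl (.idle s) :: l.map embed

@[simp] theorem inl_inl_eq_embed (A : N) : (Sum.inl (Sum.inl A) : SimSymb N T) = embed (Sum.inl A) :=
  rfl

@[simp] theorem inl_inr_eq_ctl (c : Control N T) : (Sum.inl (Sum.inr c) : SimSymb N T) = ctl c :=
  rfl

theorem embed_injective : Function.Injective (embed : Symb N T → SimSymb N T) :=
  Sum.map_injective.2 ⟨Sum.inl_injective, Function.injective_id⟩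

@[simp] theorem ctl_inj {c d : Control N T} : ctl c = ctl d ↔ c = d :=
  ⟨fun h => Sum.inr_injective (Sum.inl_injective h), congrArg ctl⟩

@[simp] theorem embed_ne_ctl (a : Symb N T) (c : Control N T) : embed a ≠ ctl c := by
  cases a <;> nofun

@[simp] theorem ctl_ne_embed (a : Symb N T) (c : Control N T) : ctl c ≠ embed a :=
  (embed_ne_ctl a c).symm

@[simp] theorem embed_mem_map_embed {a : Symb N T} {l : List (Symb N T)} :
    embed a ∈ l.map embed ↔ a ∈ l :=
  List.mem_map_of_injective embed_injective

@[simp] theorem ctl_notMem_map_embed (c : Control N T) (l : List (Symb N T)) :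
    ctl c ∉ l.map embed := by
  simp [eq_comm]

@[simp] theorem erase_embed (a : Symb N T) : erase (embed a) = a := by
  cases a <;> rfl

@[simp] theorem erase_comp_embed : (erase ∘ embed : Symb N T → Symb N T) = id :=
  funext erase_embed

@[simp] theorem erase_ctl (c : Control N T) : erase (ctl c) = c.held := rfl

theorem embed_inr (t : T) : (embed (Sum.inr t) : SimSymb N T) = Sum.inr t := rfl

@[simp] theorem erase_comp_inr : (erase ∘ Sum.inr : T → Symb N T) = Sum.inr := rfl

@[simp] theorem map_erase_encode (l : List (Symb N T)) : (encode l).map erase = l := by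
  cases l <;> simp [encode]

theorem encode_ne_nil {l : List (Symb N T)} (hl : l ≠ []) : encode l ≠ [] := by
  cases l <;> simp_all [encode]

inductive SimRule (G : SCG N T) : Rule (N ⊕ Control N T) T → Prop
  | head {A x P F} : (A, x, P, F) ∈ G.rules →
      SimRule G (Sum.inr (.idle (Sum.inl A)), encode x, embed '' P, embed '' F)
  | choose {r s} : r ∈ G.rules → s ∈ G.symbols →
      SimRule G (Sum.inr (.idle s), [ctl (.chosen r s)], ∅, ∅)
  | mark {r s} : r ∈ G.rules → s ∈ G.symbols →
      SimRule G (Sum.inl r.1, [ctl (.tag r)], {ctl (.chosen r s)}, {ctl (.tag r)})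
  -- `s` belongs to the left context `u` but is hidden inside the control symbol.
  | verify {r s} : r ∈ G.rules → s ∈ G.symbols → s ∉ r.2.2.2 →
      SimRule G (Sum.inr (.chosen r s), [ctl (.verified r s)], embed '' (r.2.2.1 \ {s}),
        embed '' r.2.2.2)
  | rewrite {r s} : r ∈ G.rules → s ∈ G.symbols →
      SimRule G (Sum.inr (.tag r), r.2.1.map embed, {ctl (.verified r s)}, ∅)
  | release {r s} : r ∈ G.rules → s ∈ G.symbols →
      SimRule G (Sum.inr (.verified r s), [ctl (.idle s)], ∅, {ctl (.tag r)})
  | finish {s} : s ∈ G.symbols → SimRule G (Sum.inr (.idle s), [embed s], ∅, ∅)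

theorem simRule_finite (G : SCG N T) : {q | SimRule G q}.Finite := by
  let perRuleSymbol (r : Rule N T) (s : Symb N T) : Set (Rule (N ⊕ Control N T) T) :=
    {(Sum.inr (.idle s), [ctl (.chosen r s)], ∅, ∅),
     (Sum.inl r.1, [ctl (.tag r)], {ctl (.chosen r s)}, {ctl (.tag r)}),
     (Sum.inr (.chosen r s), [ctl (.verified r s)], embed '' (r.2.2.1 \ {s}), embed '' r.2.2.2),
     (Sum.inr (.tag r), r.2.1.map embed, {ctl (.verified r s)}, ∅),
     (Sum.inr (.verified r s), [ctl (.idle s)], ∅, {ctl (.tag r)})}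
  have hfin : ((⋃ r ∈ G.rules, ⋃ s ∈ G.symbols, perRuleSymbol r s) ∪
      (fun r : Rule N T => (Sum.inr (.idle (Sum.inl r.1)), encode r.2.1, embed '' r.2.2.1,
        embed '' r.2.2.2)) '' G.rules ∪
      (fun s => (Sum.inr (.idle s), [embed s], ∅, ∅)) '' G.symbols).Finite :=
    ((G.fin.biUnion fun _ _ => G.symbols_finite.biUnion fun _ _ => Set.toFinite _).union
      (G.fin.image _)).union (G.symbols_finite.image _)
  refine hfin.subset fun q hq => ?_
  cases hq with
  | head hr => exact Or.inl (Or.inr ⟨_, hr, rfl⟩)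
  | finish hs => exact Or.inr ⟨_, hs, rfl⟩
  | choose hr hs | mark hr hs | verify hr hs | rewrite hr hs | release hr hs =>
    exact Or.inl (Or.inl (Set.mem_biUnion hr (Set.mem_biUnion hs (by simp [perRuleSymbol]))))

def toInclusive (G : SCG N T) : SCG (N ⊕ Control N T) T where
  rules := {q | SimRule G q}
  fin := simRule_finite G
  ne q hq := by
    cases hq with
    | head hr => exact encode_ne_nil (G.ne _ hr)
    | rewrite hr => simpa using G.ne _ hr
    | _ => simp
  per1 q hq := by
    cases hq with
    | head hr => exact (G.per1 _ hr).image _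
    | verify hr => exact ((G.per1 _ hr).anti Set.sdiff_subset).image _
    | mark | rewrite => exact Set.subsingleton_singleton
    | _ => exact Set.subsingleton_empty
  for1 q hq := by
    cases hq with
    | head hr | verify hr => exact (G.for1 _ hr).image _
    | mark | release => exact Set.subsingleton_singleton
    | _ => exact Set.subsingleton_empty
  start := Sum.inr (.idle (Sum.inl G.start))

theorem toInclusive_step {G : SCG N T} {B : N ⊕ Control N T} {x P F}
    {u v s₁ s₂ : List (SimSymb N T)} (hq : SimRule G (B, x, P, F))
    (h₁ : s₁ = u ++ Sum.inl B :: v) (h₂ : s₂ = u ++ x ++ v)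
    (hP : ∀ a ∈ P, a ∈ s₁) (hF : ∀ a ∈ F, a ∉ s₁) : G.toInclusive.Step true s₁ s₂ :=
  ⟨B, x, P, F, u, v, hq, h₁, h₂, hP, hF⟩

theorem reflTransGen_encode_of_step {G : SCG N T} {w w' : List (Symb N T)}
    (h : G.Step false w w') (hw : ∀ σ ∈ w, σ ∈ G.symbols) :
    ReflTransGen (G.toInclusive.Step true) (encode w) (encode w') := by
  obtain ⟨A, x, P, F, u, v, hr, rfl, rfl, hP, hF⟩ := h
  simp only [Bool.false_eq_true, ↓reduceIte, Set.subset_def, mem_alph] at hP hF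
  cases u with
  | nil =>
    obtain ⟨hd, xt, rfl⟩ := List.exists_cons_of_ne_nil (G.ne _ hr)
    refine .single (toInclusive_step (.head hr) (u := []) (v := v.map embed) rfl
      (by simp [encode]) ?_ ?_)
    · rintro _ ⟨a, ha, rfl⟩
      simpa [encode] using hP a ha
    · rintro _ ⟨a, ha, rfl⟩
      simpa [encode] using hF a ha
  | cons σ u =>
    set r : Rule N T := (A, x, P, F)
    have hσ : σ ∈ G.symbols := hw σ (by simp)
    have hσF : σ ∉ F := fun h => hF σ h (by simp)
    have choose : G.toInclusive.Step true (encode (σ :: u ++ Sum.inl A :: v))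
        (ctl (.chosen r σ) :: (u ++ Sum.inl A :: v).map embed) :=
      toInclusive_step (.choose hr hσ) (u := []) rfl rfl (by simp) (by simp)
    have mark : G.toInclusive.Step true (ctl (.chosen r σ) :: (u ++ Sum.inl A :: v).map embed)
        (ctl (.chosen r σ) :: u.map embed ++ ctl (.tag r) :: v.map embed) :=
      toInclusive_step (.mark hr hσ) (u := ctl (.chosen r σ) :: u.map embed) (v := v.map embed)
        (by simp [r]) (by simp) (by simp) (by simp)
    have verify : G.toInclusive.Step true
        (ctl (.chosen r σ) :: u.map embed ++ ctl (.tag r) :: v.map embed)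
        (ctl (.verified r σ) :: u.map embed ++ ctl (.tag r) :: v.map embed) := by
      refine toInclusive_step (.verify hr hσ hσF) (u := []) rfl rfl ?_ ?_
      · rintro _ ⟨a, ⟨ha, haσ⟩, rfl⟩
        simpa [Set.mem_singleton_iff.not.1 haσ] using hP a ha
      · rintro _ ⟨a, ha, rfl⟩
        simpa using List.not_mem_of_not_mem_cons (hF a ha)
    have rewrite : G.toInclusive.Step true
        (ctl (.verified r σ) :: u.map embed ++ ctl (.tag r) :: v.map embed)
        (ctl (.verified r σ) :: (u ++ x ++ v).map embed) :=
      toInclusive_step (.rewrite hr hσ) (u := ctl (.verified r σ) :: u.map embed) rfl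
        (by simp [r]) (by simp) (by simp)
    have release : G.toInclusive.Step true (ctl (.verified r σ) :: (u ++ x ++ v).map embed)
        (encode (σ :: u ++ x ++ v)) :=
      toInclusive_step (.release hr hσ) (u := []) rfl rfl (by simp) (by simp)
    exact .tail (.tail (.tail (.tail (.single choose) mark) verify) rewrite) release

theorem lang_subset_toInclusive (G : SCG N T) : G.Lang false ⊆ G.toInclusive.Lang true := by
  intro w hw
  have key : ∀ z, ReflTransGen (G.Step false) [Sum.inl G.start] z →
      (∀ σ ∈ z, σ ∈ G.symbols) ∧ ReflTransGen (G.toInclusive.Step true)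
        [Sum.inl G.toInclusive.start] (encode z) := by
    intro z hz
    induction hz with
    | refl => exact ⟨by simp [symbols], .refl⟩
    | tail _ hstep ih =>
      exact ⟨hstep.mem_symbols ih.1, ih.2.trans (reflTransGen_encode_of_step hstep ih.1)⟩
  obtain ⟨hsym, hder⟩ := key _ hw
  obtain ⟨t, w, rfl⟩ := List.exists_cons_of_ne_nil fun h => G.nil_notMem_lang false (h ▸ hw)
  refine hder.tail (toInclusive_step (.finish (hsym _ (by simp))) (u := []) rfl ?_
    (by simp) (by simp))
  simp [List.map_map, embed_inr]

inductive SimForm (G : SCG N T) : List (SimSymb N T) → Prop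
  | idle (s : Symb N T) (l : List (Symb N T)) : SimForm G (ctl (.idle s) :: l.map embed)
  | chosen (r : Rule N T) (s : Symb N T) (l : List (Symb N T)) :
      SimForm G (ctl (.chosen r s) :: l.map embed)
  | marked (r : Rule N T) (s : Symb N T) (l₁ l₂ : List (Symb N T)) :
      SimForm G (ctl (.chosen r s) :: l₁.map embed ++ ctl (.tag r) :: l₂.map embed)
  | verified (r : Rule N T) (s : Symb N T) (l : List (Symb N T)) :
      SimForm G (ctl (.verified r s) :: l.map embed)
  | ready (r : Rule N T) (s : Symb N T) (l₁ l₂ : List (Symb N T)) :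
      G.Step false (s :: l₁ ++ Sum.inl r.1 :: l₂) (s :: l₁ ++ r.2.1 ++ l₂) →
      SimForm G (ctl (.verified r s) :: l₁.map embed ++ ctl (.tag r) :: l₂.map embed)
  | done (l : List (Symb N T)) : SimForm G (l.map embed)

theorem toInclusive_step_iff {G : SCG N T} {s₁ s₂ : List (SimSymb N T)} :
    G.toInclusive.Step true s₁ s₂ ↔ ∃ B x P F u v, SimRule G (B, x, P, F) ∧
      s₁ = u ++ Sum.inl B :: v ∧ s₂ = u ++ x ++ v ∧ (∀ a ∈ P, a ∈ s₁) ∧ ∀ a ∈ F, a ∉ s₁ :=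
  Iff.rfl

section Soundness

variable {G : SCG N T} {r : Rule N T} {s : Symb N T} {l l₁ l₂ : List (Symb N T)}
  {s₂ : List (SimSymb N T)}

theorem toInclusive_step_idle (h : G.toInclusive.Step true (ctl (.idle s) :: l.map embed) s₂) :
    SimForm G s₂ ∧ ReflGen (G.Step false) (s :: l) (s₂.map erase) := by
  obtain ⟨B, x, P, F, u, v, hq, h₁, rfl, hP, hF⟩ := toInclusive_step_iff.1 h
  have hB : Sum.inl B ∈ ctl (.idle s) :: l.map embed := h₁ ▸ List.mem_append_cons_self
  cases hq
  all_goals try (simp at hB; done)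
  all_goals try (simp at hP; done)
  all_goals obtain ⟨rfl, hc, rfl⟩ := List.cons_eq_append_cons_of_notMem h₁ (by simp)
  case head A x P F hr =>
    obtain rfl : s = Sum.inl A := by simpa using hc
    obtain ⟨hd, xt, rfl⟩ := List.exists_cons_of_ne_nil (G.ne _ hr)
    refine ⟨by simpa [encode] using SimForm.idle hd (xt ++ l), .single ?_⟩
    simpa using step_false_of_mem_rules hr (u := []) (v := l)
      (fun a ha => by simpa using hP _ ⟨a, ha, rfl⟩) (fun a ha => by simpa using hF _ ⟨a, ha, rfl⟩)
  case choose r s' hr hs' =>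
    obtain rfl : s = s' := by simpa using hc
    exact ⟨SimForm.chosen r s l, by simpa using .refl⟩
  case finish s' hs' =>
    obtain rfl : s = s' := by simpa using hc
    exact ⟨by simpa using SimForm.done (G := G) (s :: l), by simpa using .refl⟩

theorem toInclusive_step_chosen
    (h : G.toInclusive.Step true (ctl (.chosen r s) :: l.map embed) s₂) :
    SimForm G s₂ ∧ ReflGen (G.Step false) (s :: l) (s₂.map erase) := by
  obtain ⟨B, x, P, F, u, v, hq, h₁, rfl, hP, hF⟩ := toInclusive_step_iff.1 h
  have hB : Sum.inl B ∈ ctl (.chosen r s) :: l.map embed := h₁ ▸ List.mem_append_cons_self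
  cases hq
  all_goals try (simp at hB; done)
  case mark r' s' hr hs' =>
    obtain ⟨rfl, rfl⟩ : r' = r ∧ s' = s := by simpa using hP
    rcases List.cons_eq_append_iff.1 h₁ with ⟨-, hl⟩ | ⟨u, rfl, hl⟩
    · simp at hl
    obtain ⟨l₁, l₂, rfl, rfl, rfl⟩ := List.map_eq_append_cons_of_injective embed_injective
      (a := Sum.inl r'.1) hl
    exact ⟨by simpa using SimForm.marked r' s' l₁ l₂, by simpa using .refl⟩
  case verify r' s' hr hs' hs'F =>
    obtain ⟨rfl, hc, rfl⟩ := List.cons_eq_append_cons_of_notMem h₁ (by simp)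
    obtain ⟨rfl, rfl⟩ : r = r' ∧ s = s' := by simpa using hc
    exact ⟨SimForm.verified r s l, by simpa using .refl⟩

theorem toInclusive_step_marked (h : G.toInclusive.Step true
      (ctl (.chosen r s) :: l₁.map embed ++ ctl (.tag r) :: l₂.map embed) s₂) :
    SimForm G s₂ ∧ ReflGen (G.Step false) (s :: l₁ ++ Sum.inl r.1 :: l₂) (s₂.map erase) := by
  obtain ⟨B, x, P, F, u, v, hq, h₁, rfl, hP, hF⟩ := toInclusive_step_iff.1 h
  have hB : Sum.inl B ∈ ctl (.chosen r s) :: l₁.map embed ++ ctl (.tag r) :: l₂.map embed :=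
    h₁ ▸ List.mem_append_cons_self
  cases hq
  all_goals try (simp at hB; done)
  all_goals try (simp at hP; done)
  case mark r' s' hr hs' =>
    obtain ⟨rfl, rfl⟩ : r' = r ∧ s' = s := by simpa using hP
    simp at hF
  case verify r' s' hr hs' hs'F =>
    obtain ⟨rfl, hc, rfl⟩ := List.cons_eq_append_cons_of_notMem h₁ (by simp)
    obtain ⟨rfl, rfl⟩ : r = r' ∧ s = s' := by simpa using hc
    obtain ⟨A, x, P, F⟩ := r
    refine ⟨SimForm.ready _ s l₁ l₂ (step_false_of_mem_rules hr (u := s :: l₁) ?_ ?_),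
      by simpa using .refl⟩
    · intro a ha
      by_cases has : a = s
      · simp [has]
      · simpa [has] using hP _ ⟨a, ⟨ha, has⟩, rfl⟩
    · intro a ha
      have has : a ≠ s := by rintro rfl; exact hs'F ha
      simpa [has] using hF _ ⟨a, ha, rfl⟩

theorem toInclusive_step_verified
    (h : G.toInclusive.Step true (ctl (.verified r s) :: l.map embed) s₂) :
    SimForm G s₂ ∧ ReflGen (G.Step false) (s :: l) (s₂.map erase) := by
  obtain ⟨B, x, P, F, u, v, hq, h₁, rfl, hP, hF⟩ := toInclusive_step_iff.1 h
  have hB : Sum.inl B ∈ ctl (.verified r s) :: l.map embed := h₁ ▸ List.mem_append_cons_self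
  cases hq
  all_goals try (simp at hB; done)
  all_goals try (simp at hP; done)
  case release r' s' hr hs' =>
    obtain ⟨rfl, hc, rfl⟩ := List.cons_eq_append_cons_of_notMem h₁ (by simp)
    obtain ⟨rfl, rfl⟩ : r = r' ∧ s = s' := by simpa using hc
    exact ⟨SimForm.idle s l, by simpa using .refl⟩

theorem toInclusive_step_ready (h : G.toInclusive.Step true
      (ctl (.verified r s) :: l₁.map embed ++ ctl (.tag r) :: l₂.map embed) s₂)
    (hG : G.Step false (s :: l₁ ++ Sum.inl r.1 :: l₂) (s :: l₁ ++ r.2.1 ++ l₂)) :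
    SimForm G s₂ ∧ ReflGen (G.Step false) (s :: l₁ ++ Sum.inl r.1 :: l₂) (s₂.map erase) := by
  obtain ⟨B, x, P, F, u, v, hq, h₁, rfl, hP, hF⟩ := toInclusive_step_iff.1 h
  have hB : Sum.inl B ∈ ctl (.verified r s) :: l₁.map embed ++ ctl (.tag r) :: l₂.map embed :=
    h₁ ▸ List.mem_append_cons_self
  cases hq
  all_goals try (simp at hB; done)
  all_goals try (simp at hP; done)
  case rewrite r' s' hr hs' =>
    obtain ⟨rfl, rfl⟩ : r' = r ∧ s' = s := by simpa using hP
    obtain ⟨rfl, -, rfl⟩ := (List.append_cons_inj_of_notMem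
      (x₁ := ctl (.verified r' s') :: l₁.map embed) (by simp) (by simp)).1 h₁
    exact ⟨by simpa using SimForm.verified r' s' (l₁ ++ r'.2.1 ++ l₂), .single (by simpa using hG)⟩
  case release r' s' hr hs' =>
    obtain ⟨rfl, rfl⟩ : r' = r ∧ s' = s := by simpa using hB
    simp at hF

theorem not_toInclusive_step_map_embed : ¬ G.toInclusive.Step true (l.map embed) s₂ := by
  intro h
  obtain ⟨B, x, P, F, u, v, hq, h₁, -, hP, -⟩ := toInclusive_step_iff.1 h
  have hB : Sum.inl B ∈ l.map embed := h₁ ▸ List.mem_append_cons_self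
  cases hq
  all_goals try (simp at hB; done)
  simp at hP

theorem SimForm.step {s₁ : List (SimSymb N T)} (hs : SimForm G s₁)
    (h : G.toInclusive.Step true s₁ s₂) :
    SimForm G s₂ ∧ ReflGen (G.Step false) (s₁.map erase) (s₂.map erase) := by
  cases hs with
  | idle => simpa using toInclusive_step_idle h
  | chosen => simpa using toInclusive_step_chosen h
  | marked => simpa using toInclusive_step_marked h
  | verified => simpa using toInclusive_step_verified h
  | ready _ _ _ _ hG => simpa using toInclusive_step_ready h hG
  | done => exact (not_toInclusive_step_map_embed h).elim

end Soundness

theorem toInclusive_lang_subset (G : SCG N T) : G.toInclusive.Lang true ⊆ G.Lang false := by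
  intro w hw
  have key : ∀ z, ReflTransGen (G.toInclusive.Step true) [Sum.inl G.toInclusive.start] z →
      SimForm G z ∧ ReflTransGen (G.Step false) [Sum.inl G.start] (z.map erase) := by
    intro z hz
    induction hz with
    | refl => exact ⟨SimForm.idle _ [], .refl⟩
    | tail _ hstep ih =>
      obtain ⟨hs, hder⟩ := ih
      obtain ⟨hs', hstep'⟩ := hs.step hstep
      exact ⟨hs', hder.trans hstep'.to_reflTransGen⟩
  simpa [Lang, List.map_map] using (key _ hw).2

theorem lang_toInclusive (G : SCG N T) : G.toInclusive.Lang true = G.Lang false :=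
  (toInclusive_lang_subset G).antisymm (lang_subset_toInclusive G)

end SCG

/-- SC(1,1) = SC'(1,1). -/
theorem sc11_eq_sc11' (T : Type) : SC11 T = SC11' T := by
  ext L
  constructor
  · rintro ⟨N, G, rfl⟩
    exact ⟨N, G.toExclusive, G.lang_toExclusive⟩
  · rintro ⟨N, G, rfl⟩
    exact ⟨N ⊕ SCG.Control N T, G.toInclusive, G.lang_toInclusive⟩
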